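/- Let G = (V,E) be a finite connected simple graph and let w₁, w₂ : E → ℝ be injective edge-weight functions with w₂(e) ≤ w₁(e) for all e ∈ E; let E⁻ = { e ∈ E : w₂(e) < w₁(e) }. Let T₁ be a minimum-weight spanning tree of G with respect to w₁ and set B = T₁ ∪ E⁻. Let B* ⊆ B be a set such that B \ B* is a spanning tree of G and w₂(B*) ≥ w₂(B') for every B' ⊆ B such that B \ B' is a spanning tree of G. Then B \ B* is a minimum-weight spanning tree of G with respect to w₂. -/

import Mathlib

/-!
Some `w₂`-minimum spanning tree `T₂` lies inside `B = T₁ ∪ E⁻`. Indeed, an edge `e ∈ T₂ \ B` has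
`w₂ e = w₁ e`; by the symmetric exchange property of spanning trees there is `f ∈ T₁ \ T₂` such
that both `T₁ - f + e` and `T₂ - e + f` are spanning trees, and then
`w₂ f ≤ w₁ f ≤ w₁ e = w₂ e` since `T₁` is `w₁`-minimum, so `e` can be traded for `f ∈ B`.
Now `B \ T₂` is a competitor for `B*`, whence
`w₂(B \ B*) = w₂(B) - w₂(B*) ≤ w₂(B) - w₂(B \ T₂) = w₂(T₂)`.
-/

/-- The edge set `S` is acyclic: the graph `(V, S)` contains no cycle. -/
def EdgesAcyclic {V : Type*} (S : Finset (Sym2 V)) : Prop :=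
  (SimpleGraph.fromEdgeSet (S : Set (Sym2 V))).IsAcyclic

/-- The edge set `S` spans a connected graph `(V, S)` on the whole vertex set. -/
def EdgesConnected {V : Type*} (S : Finset (Sym2 V)) : Prop :=
  (SimpleGraph.fromEdgeSet (S : Set (Sym2 V))).Connected

/-- `T` is a spanning tree of `G`: a subset of the edges of `G` such that the
subgraph `(V, T)` is connected and acyclic. -/
def IsSpanningTree {V : Type*} (G : SimpleGraph V) (T : Finset (Sym2 V)) : Prop :=
  (T : Set (Sym2 V)) ⊆ G.edgeSet ∧ EdgesConnected T ∧ EdgesAcyclic T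

/-- The weight of an edge set: `w(S) = ∑_{e ∈ S} w(e)`. -/
def wsum {V : Type*} (w : Sym2 V → ℝ) (S : Finset (Sym2 V)) : ℝ := ∑ e ∈ S, w e

/-- `T` is a minimum-weight spanning tree of `G` with respect to `w`. -/
def IsMST {V : Type*} (G : SimpleGraph V) (w : Sym2 V → ℝ) (T : Finset (Sym2 V)) : Prop :=
  IsSpanningTree G T ∧ ∀ T' : Finset (Sym2 V), IsSpanningTree G T' → wsum w T ≤ wsum w T'

namespace SimpleGraph

variable {V : Type*} {H K : SimpleGraph V} {a b u v x : V}

lemma Reachable.reachable_or_reachable_deleteEdges (h : H.Reachable x u) :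
    (H.deleteEdges {s(u, v)}).Reachable x u ∨ (H.deleteEdges {s(u, v)}).Reachable x v := by
  obtain ⟨p⟩ := h
  induction p with
  | nil => exact .inl (Reachable.refl _)
  | @cons x y w hxy _ ih =>
    by_cases he : s(x, y) = s(w, v)
    · rcases Sym2.eq_iff.mp he with ⟨rfl, -⟩ | ⟨rfl, -⟩
      exacts [.inl (Reachable.refl _), .inr (Reachable.refl _)]
    · have hxy' : (H.deleteEdges {s(w, v)}).Adj x y := by simp [hxy, he]
      exact ih.imp hxy'.reachable.trans hxy'.reachable.trans

/-- Deleting `s(u, v)` from a connected graph leaves at most the components of `u` and `v`, so an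
edge between two vertices that the deletion separates reconnects the graph. -/
lemma Connected.connected_of_deleteEdges_le (hH : H.Connected) (hK : H.deleteEdges {s(u, v)} ≤ K)
    (hab : K.Adj a b) (hsep : ¬ (H.deleteEdges {s(u, v)}).Reachable a b) : K.Connected := by
  have hside (x : V) := (hH.preconnected x u).reachable_or_reachable_deleteEdges (v := v)
  have huv : K.Reachable u v := by
    rcases hside a with ha | ha <;> rcases hside b with hb | hb
    · exact absurd (ha.trans hb.symm) hsep
    · exact ((ha.mono hK).symm.trans hab.reachable).trans (hb.mono hK)
    · exact ((hb.mono hK).symm.trans hab.symm.reachable).trans (ha.mono hK)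
    · exact absurd (ha.trans hb.symm) hsep
  have hu (x : V) : K.Reachable x u :=
    (hside x).elim (·.mono hK) fun hx => (hx.mono hK).trans huv.symm
  have := hH.nonempty
  exact .mk fun x y => (hu x).trans (hu y).symm

lemma IsAcyclic.not_reachable_deleteEdges_of_mem_edges [DecidableEq V] (hH : H.IsAcyclic)
    {p : H.Walk u v} (hp : p.IsPath) (hab : s(a, b) ∈ p.edges) :
    ¬ (H.deleteEdges {s(a, b)}).Reachable u v := by
  rw [reachable_deleteEdges_iff_exists_walk]
  rintro ⟨q, hq⟩
  have hpq : (⟨p, hp⟩ : H.Path u v) = q.toPath := (hH.subsingleton_path u v).elim _ _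
  exact hq (q.edges_toPath_subset_edges (congrArg Subtype.val hpq ▸ hab))

end SimpleGraph

open SimpleGraph Finset

section SpanningTree

variable {V : Type*} {G : SimpleGraph V} {T T' : Finset (Sym2 V)}

lemma isSpanningTree_iff_card [Finite V] :
    IsSpanningTree G T ↔
      (T : Set (Sym2 V)) ⊆ G.edgeSet ∧ EdgesConnected T ∧ #T + 1 = Nat.card V := by
  refine and_congr_right fun hT => ?_
  have hedges : (fromEdgeSet (T : Set (Sym2 V))).edgeSet = T := by
    rw [edgeSet_fromEdgeSet, sdiff_eq_left, Set.disjoint_left]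
    exact fun e he => G.not_isDiag_of_mem_edgeSet (hT he)
  rw [EdgesConnected, EdgesAcyclic, ← isTree_iff, isTree_iff_connected_and_card, hedges,
    Nat.card_coe_set_eq, Set.ncard_coe_finset]

variable [DecidableEq V] {a b u v : V} {e : Sym2 V}

lemma IsSpanningTree.insert_erase [Finite V] (hT : IsSpanningTree G T) (hf : s(u, v) ∈ T)
    (he : s(a, b) ∉ T) (hab : G.Adj a b)
    (hsep : ¬ ((fromEdgeSet (T : Set (Sym2 V))).deleteEdges {s(u, v)}).Reachable a b) :
    IsSpanningTree G (insert s(a, b) (T.erase s(u, v))) := by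
  rw [isSpanningTree_iff_card] at hT ⊢
  obtain ⟨hTG, hTc, hTcard⟩ := hT
  refine ⟨?_, ?_, ?_⟩
  · rw [coe_insert, coe_erase, Set.insert_subset_iff]
    exact ⟨hab, Set.sdiff_subset.trans hTG⟩
  · refine hTc.connected_of_deleteEdges_le ?_ ?_ hsep
    · rw [deleteEdges_fromEdgeSet, coe_insert, coe_erase]
      exact fromEdgeSet_mono (Set.subset_insert _ _)
    · simpa using hab.ne
  · rwa [card_insert_of_notMem (he ∘ mem_of_mem_erase), card_erase_add_one hf]

lemma IsSpanningTree.exists_exchange [Finite V] (hT : IsSpanningTree G T)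
    (hT' : IsSpanningTree G T') (he : e ∈ T') (heT : e ∉ T) :
    ∃ f ∈ T, f ∉ T' ∧
      IsSpanningTree G (insert e (T.erase f)) ∧ IsSpanningTree G (insert f (T'.erase e)) := by
  induction e using Sym2.ind with | _ u v => ?_
  set K := (fromEdgeSet (T' : Set (Sym2 V))).deleteEdges {s(u, v)}
  have hsep : ¬ K.Reachable u v :=
    isAcyclic_iff_forall_isBridge.mp hT'.2.2 (e := s(u, v)) (by simpa using ⟨he, (hT'.1 he).ne⟩)
  obtain ⟨p, hp⟩ := hT.2.1.exists_isPath u v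
  obtain ⟨⟨⟨a, b⟩, hab⟩, hd, ha, hb⟩ :=
    p.exists_boundary_dart {x | K.Reachable u x} (Reachable.refl _) hsep
  have habT : s(a, b) ∈ T := hab.1
  have hsep' : ¬ K.Reachable a b := fun h => hb (ha.trans h)
  have hne : s(a, b) ≠ s(u, v) := ne_of_mem_of_not_mem habT heT
  have habT' : s(a, b) ∉ T' := fun h =>
    hsep' (deleteEdges_adj.mpr ⟨(fromEdgeSet_adj _).mpr ⟨h, hab.2⟩, hne⟩).reachable
  refine ⟨s(a, b), habT, habT',
    hT.insert_erase habT heT (hT'.1 he) (hT.2.2.not_reachable_deleteEdges_of_mem_edges hp ?_),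
    hT'.insert_erase he habT' (hT.1 habT) hsep'⟩
  exact p.edges_eq_map_darts ▸ List.mem_map_of_mem hd

end SpanningTree

section MST

variable {V : Type*} {G : SimpleGraph V} {w w₁ w₂ : Sym2 V → ℝ} {T T' T₁ B : Finset (Sym2 V)}

lemma exists_isMST [Finite V] (hT : IsSpanningTree G T) (w : Sym2 V → ℝ) : ∃ T, IsMST G w T := by
  obtain ⟨T₀, hT₀, hmin⟩ := Set.exists_min_image {T | IsSpanningTree G T} (wsum w)
    (Set.toFinite _) ⟨T, hT⟩
  exact ⟨T₀, hT₀, hmin⟩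

lemma IsMST.of_wsum_le (hT : IsMST G w T) (hT' : IsSpanningTree G T')
    (h : wsum w T' ≤ wsum w T) : IsMST G w T' :=
  ⟨hT', fun S hS => h.trans (hT.2 S hS)⟩

variable [DecidableEq V] {e f : Sym2 V}

lemma wsum_insert_erase (hf : f ∈ T) (he : e ∉ T) :
    wsum w (insert e (T.erase f)) = wsum w T - w f + w e := by
  rw [wsum, sum_insert (he ∘ mem_of_mem_erase), sum_erase_eq_sub hf, wsum]
  ring

lemma IsMST.apply_le_of_isSpanningTree_insert_erase (hT : IsMST G w T) (hf : f ∈ T) (he : e ∉ T)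
    (h : IsSpanningTree G (insert e (T.erase f))) : w f ≤ w e := by
  have := hT.2 _ h
  rw [wsum_insert_erase hf he] at this
  linarith

/-- The exchange only gives `w₂ f ≤ w₂ e`, not a strict decrease, so `T₂` is chosen among the
`w₂`-minimum trees with fewest edges outside `B`. -/
theorem exists_isMST_subset [Finite V] (hT₁ : IsMST G w₁ T₁) (hT₁B : T₁ ⊆ B)
    (hle : ∀ f ∈ T₁, w₂ f ≤ w₁ f) (hB : ∀ e ∈ G.edgeSet, e ∉ B → w₁ e ≤ w₂ e) :
    ∃ T₂, IsMST G w₂ T₂ ∧ T₂ ⊆ B := by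
  obtain ⟨T₀, hT₀⟩ := exists_isMST hT₁.1 w₂
  obtain ⟨T₂, hT₂, hmin⟩ := Set.exists_min_image {T | IsMST G w₂ T} (fun T => #(T \ B))
    (Set.toFinite _) ⟨T₀, hT₀⟩
  refine ⟨T₂, hT₂, fun e he => by_contra fun heB => ?_⟩
  have heT₁ : e ∉ T₁ := fun h => heB (hT₁B h)
  obtain ⟨f, hfT₁, hfT₂, hS₁, hS₂⟩ := hT₁.1.exists_exchange hT₂.1 he heT₁
  have hfe : w₁ f ≤ w₁ e := hT₁.apply_le_of_isSpanningTree_insert_erase hfT₁ heT₁ hS₁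
  have hS₂min : IsMST G w₂ (insert f (T₂.erase e)) := by
    refine hT₂.of_wsum_le hS₂ ?_
    rw [wsum_insert_erase he hfT₂]
    linarith [hle f hfT₁, hB e (hT₂.1.1 he) heB]
  have hcard : #(insert f (T₂.erase e) \ B) < #(T₂ \ B) := by
    rw [insert_sdiff_of_mem _ (hT₁B hfT₁), erase_sdiff_comm]
    exact card_erase_lt_of_mem (mem_sdiff.mpr ⟨he, heB⟩)
  exact (hmin _ hS₂min).not_gt hcard

end MST

theorem stmt_9_general {V : Type*} [Fintype V] [DecidableEq V] (G : SimpleGraph V)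
    (w₁ w₂ : Sym2 V → ℝ)
    (hle : ∀ e ∈ G.edgeSet, w₂ e ≤ w₁ e)
    (Eminus : Finset (Sym2 V)) (hEm : ∀ e, e ∈ Eminus ↔ e ∈ G.edgeSet ∧ w₂ e < w₁ e)
    (T₁ : Finset (Sym2 V)) (hT₁ : IsMST G w₁ T₁)
    (Bstar : Finset (Sym2 V)) (hBsub : Bstar ⊆ T₁ ∪ Eminus)
    (hBst : IsSpanningTree G ((T₁ ∪ Eminus) \ Bstar))
    (hBmax : ∀ B' : Finset (Sym2 V), B' ⊆ T₁ ∪ Eminus →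
      IsSpanningTree G ((T₁ ∪ Eminus) \ B') → wsum w₂ B' ≤ wsum w₂ Bstar) :
    IsMST G w₂ ((T₁ ∪ Eminus) \ Bstar) := by
  obtain ⟨T₂, hT₂, hT₂B⟩ := exists_isMST_subset hT₁ subset_union_left
    (fun f hf => hle f (hT₁.1.1 hf))
    (fun e he heB => not_lt.mp fun h => heB (mem_union_right _ ((hEm e).mpr ⟨he, h⟩)))
  have hcompl := hBmax (_ \ T₂) sdiff_subset
    (by rw [Finset.sdiff_sdiff_eq_self hT₂B]; exact hT₂.1)
  have hsplit₂ : wsum w₂ (_ \ T₂) + wsum w₂ T₂ = wsum w₂ (T₁ ∪ Eminus) := sum_sdiff hT₂B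
  have hsplit : wsum w₂ (_ \ Bstar) + wsum w₂ Bstar = wsum w₂ (T₁ ∪ Eminus) := sum_sdiff hBsub
  exact hT₂.of_wsum_le hBst (by linarith)

/-- Let `w₂ ≤ w₁` be injective edge weights on a finite connected simple
graph, `E⁻ = { e : w₂(e) < w₁(e) }`, `T₁` an MST for `w₁`, `B = T₁ ∪ E⁻`. If `B* ⊆ B`
is such that `B \ B*` is a spanning tree and `w₂(B*)` is maximum among all `B' ⊆ B` with
`B \ B'` a spanning tree, then `B \ B*` is an MST for `w₂`. -/
theorem stmt_9 {V : Type*} [Fintype V] [DecidableEq V] (G : SimpleGraph V)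
    (hG : G.Connected) (w₁ w₂ : Sym2 V → ℝ)
    (hw₁ : Set.InjOn w₁ G.edgeSet) (hw₂ : Set.InjOn w₂ G.edgeSet)
    (hle : ∀ e ∈ G.edgeSet, w₂ e ≤ w₁ e)
    (Eminus : Finset (Sym2 V)) (hEm : ∀ e, e ∈ Eminus ↔ e ∈ G.edgeSet ∧ w₂ e < w₁ e)
    (T₁ : Finset (Sym2 V)) (hT₁ : IsMST G w₁ T₁)
    (Bstar : Finset (Sym2 V)) (hBsub : Bstar ⊆ T₁ ∪ Eminus)
    (hBst : IsSpanningTree G ((T₁ ∪ Eminus) \ Bstar))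
    (hBmax : ∀ B' : Finset (Sym2 V), B' ⊆ T₁ ∪ Eminus →
      IsSpanningTree G ((T₁ ∪ Eminus) \ B') → wsum w₂ B' ≤ wsum w₂ Bstar) :
    IsMST G w₂ ((T₁ ∪ Eminus) \ Bstar) :=
  stmt_9_general G w₁ w₂ hle Eminus hEm T₁ hT₁ Bstar hBsub hBst hBmax
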